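/- Let x̂ ∈ S¹ and suppose the normal Lyapunov exponent λ := lim_{n→∞} (1/n) Σ_{k=0}^{n-1} ln|1 + cos(2π·3^k x̂)/32| exists and is negative. Then there exists δ > 0 such that for all z ∈ [0, δ], the forward orbit of (x̂, z) under f converges to the boundary circle S¹ × {0}, i.e., f_z^n(x̂, z) → 0 as n → ∞. -/

import Mathlib

/-!
Along the orbit of `(x̂, z)` the height `z_n` obeys `z_{n+1} ≤ z_n a_n exp (z_n / 31)` with
`a_n = 1 + cos (2π 3ⁿ x̂) / 32`. A negative Lyapunov exponent `λ` makes the linear cocycle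
`∏_{k<n} a_k` bounded by `C qⁿ` with `q = exp (λ / 2) < 1`. As long as `z_k ≤ 2 C z qᵏ` for
`k < n`, the nonlinear factors `exp (z_k / 31)` multiply to at most `2` once `z` is small, and
this closes the induction `z_n ≤ 2 C z qⁿ`.
-/

open Real Set Filter Topology

/-- The Kan map on the real cover of the annulus: `x ↦ 3x`,
`z ↦ z + cos(2πx)(z/32)(1-z)` (the `z`-dynamics only sees `x mod 1`). -/
noncomputable def kanCover (p : ℝ × ℝ) : ℝ × ℝ :=
  (3 * p.1, p.2 + Real.cos (2 * π * p.1) * (p.2 / 32) * (1 - p.2))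

open Finset

lemma kanCover_iterate_fst (p : ℝ × ℝ) (n : ℕ) : (kanCover^[n] p).1 = 3 ^ n * p.1 := by
  induction n with
  | zero => simp
  | succ n ih =>
    rw [Function.iterate_succ_apply', kanCover, ih]
    ring

lemma kanCover_snd_mem_Icc {p : ℝ × ℝ} (hp : p.2 ∈ Icc (0 : ℝ) 1) :
    (kanCover p).2 ∈ Icc (0 : ℝ) 1 := by
  obtain ⟨hz0, hz1⟩ := hp
  have hc₁ := neg_one_le_cos (2 * π * p.1)
  have hc₂ := cos_le_one (2 * π * p.1)
  have hz : 0 ≤ p.2 * (1 - p.2) := mul_nonneg hz0 (by linarith)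
  constructor <;> simp only [kanCover] <;>
    nlinarith [mul_nonneg hz (by linarith : 0 ≤ 1 + cos (2 * π * p.1)),
      mul_nonneg hz (by linarith : 0 ≤ 1 - cos (2 * π * p.1))]

lemma kanCover_iterate_snd_mem_Icc {p : ℝ × ℝ} (hp : p.2 ∈ Icc (0 : ℝ) 1) (n : ℕ) :
    (kanCover^[n] p).2 ∈ Icc (0 : ℝ) 1 := by
  induction n with
  | zero => exact hp
  | succ n ih =>
    rw [Function.iterate_succ_apply']
    exact kanCover_snd_mem_Icc ih

lemma kanCover_snd_le {p : ℝ × ℝ} (hp : 0 ≤ p.2) :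
    (kanCover p).2 ≤ p.2 * (1 + cos (2 * π * p.1) / 32) * exp (p.2 / 31) := by
  set c := cos (2 * π * p.1)
  have hc : 0 ≤ 1 + c := by linarith [neg_one_le_cos (2 * π * p.1)]
  have ha : 0 ≤ 1 + c / 32 := by linarith
  -- the gap to the linearisation `z a (1 + z/31)` is exactly `z² (1 + c) / 31`
  have hlin : (kanCover p).2 ≤ p.2 * (1 + c / 32) * (1 + p.2 / 31) := by
    have : 0 ≤ p.2 ^ 2 * (1 + c) / 31 := by positivity
    simp only [kanCover]
    linarith
  calc (kanCover p).2 ≤ p.2 * (1 + c / 32) * (1 + p.2 / 31) := hlin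
    _ ≤ p.2 * (1 + c / 32) * exp (p.2 / 31) := by
      gcongr
      linarith [add_one_le_exp (p.2 / 31)]

lemma exists_abs_prod_le_of_tendsto {a : ℕ → ℝ} {lam μ : ℝ}
    (hlim : Tendsto (fun n : ℕ => (1 / n : ℝ) * ∑ k ∈ range n, log |a k|) atTop (𝓝 lam))
    (hμ : lam < μ) : ∃ C, ∀ n, |∏ k ∈ range n, a k| ≤ C * exp μ ^ n := by
  have hev : ∀ᶠ n : ℕ in atTop, |∏ k ∈ range n, a k| ≤ exp μ ^ n := by
    filter_upwards [hlim.eventually (gt_mem_nhds hμ), eventually_gt_atTop 0] with n hn hn0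
    have hsum : ∑ k ∈ range n, log |a k| ≤ n * μ := by
      rw [one_div, inv_mul_lt_iff₀ (by exact_mod_cast hn0)] at hn
      exact hn.le
    calc |∏ k ∈ range n, a k| = ∏ k ∈ range n, |a k| := abs_prod _ _
      _ ≤ ∏ k ∈ range n, exp (log |a k|) :=
        prod_le_prod (fun k _ => abs_nonneg _) (fun k _ => le_exp_log _)
      _ = exp (∑ k ∈ range n, log |a k|) := (exp_sum _ _).symm
      _ ≤ exp (n * μ) := exp_le_exp.2 hsum
      _ = exp μ ^ n := exp_nat_mul μ n
  have hO : (fun n => |∏ k ∈ range n, a k|) =O[atTop] fun n => exp μ ^ n :=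
    .of_bound' (hev.mono fun n hn => by simpa [abs_of_nonneg (pow_nonneg (exp_nonneg μ) n)])
  obtain ⟨C, hC⟩ := (Asymptotics.isBigO_nat_atTop_iff fun n h =>
    absurd h (pow_ne_zero n (exp_pos μ).ne')).1 hO
  exact ⟨C, fun n => by simpa [abs_of_nonneg (pow_nonneg (exp_nonneg μ) n)] using hC n⟩

lemma le_mul_prod_mul_exp_sum_of_succ_le {a Z : ℕ → ℝ} {K : ℝ} (ha : ∀ n, 0 ≤ a n)
    (hstep : ∀ n, Z (n + 1) ≤ Z n * a n * exp (K * Z n)) (n : ℕ) :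
    Z n ≤ Z 0 * (∏ k ∈ range n, a k) * exp (K * ∑ k ∈ range n, Z k) := by
  induction n with
  | zero => simp
  | succ n ih =>
    calc Z (n + 1) ≤ Z n * a n * exp (K * Z n) := hstep n
      _ ≤ Z 0 * (∏ k ∈ range n, a k) * exp (K * ∑ k ∈ range n, Z k) * a n * exp (K * Z n) := by
        gcongr
        exact ha n
      _ = Z 0 * (∏ k ∈ range (n + 1), a k) * exp (K * ∑ k ∈ range (n + 1), Z k) := by
        rw [prod_range_succ, sum_range_succ, mul_add, exp_add]
        ring

lemma le_mul_pow_of_succ_le_mul_exp {a Z : ℕ → ℝ} {C q K : ℝ} (hq₀ : 0 ≤ q) (hq : q < 1)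
    (hK : 0 ≤ K) (ha : ∀ n, 0 ≤ a n) (hZ : ∀ n, 0 ≤ Z n)
    (hprod : ∀ n, ∏ k ∈ range n, a k ≤ C * q ^ n)
    (hstep : ∀ n, Z (n + 1) ≤ Z n * a n * exp (K * Z n))
    (hsmall : 2 * C * K * Z 0 ≤ log 2 * (1 - q)) (n : ℕ) :
    Z n ≤ 2 * C * Z 0 * q ^ n := by
  have hC : 0 ≤ C := by simpa using (zero_le_one.trans (hprod 0))
  have h1q : 0 < 1 - q := by linarith
  induction n using Nat.strong_induction_on with
  | _ n ih =>
    have hsum : K * ∑ k ∈ range n, Z k ≤ log 2 :=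
      calc K * ∑ k ∈ range n, Z k ≤ K * ∑ k ∈ range n, 2 * C * Z 0 * q ^ k := by
            gcongr with k hk
            exact ih k (mem_range.1 hk)
        _ = 2 * C * K * Z 0 * ∑ k ∈ range n, q ^ k := by
            rw [mul_sum, mul_sum]
            exact sum_congr rfl fun k _ => by ring
        _ ≤ 2 * C * K * Z 0 * (1 / (1 - q)) := by
            refine mul_le_mul_of_nonneg_left ?_
              (mul_nonneg (mul_nonneg (mul_nonneg zero_le_two hC) hK) (hZ 0))
            have := geom_sum_Ico_le_of_lt_one (x := q) (m := 0) (n := n) hq₀ hq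
            rwa [← range_eq_Ico, pow_zero] at this
        _ ≤ log 2 := by
            rw [mul_one_div, div_le_iff₀ h1q]
            exact hsmall
    calc Z n ≤ Z 0 * (∏ k ∈ range n, a k) * exp (K * ∑ k ∈ range n, Z k) :=
          le_mul_prod_mul_exp_sum_of_succ_le ha hstep n
      _ ≤ Z 0 * (C * q ^ n) * 2 :=
          mul_le_mul (mul_le_mul_of_nonneg_left (hprod n) (hZ 0))
            ((exp_le_exp.2 hsum).trans_eq (exp_log two_pos)) (exp_nonneg _)
            (mul_nonneg (hZ 0) (by positivity))
      _ = 2 * C * Z 0 * q ^ n := by ring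

/-- A point of the base circle with negative normal Lyapunov exponent has an
immediate stable manifold of positive length. -/
theorem stmt_9 (xhat lam : ℝ)
    (hlim : Tendsto (fun n : ℕ => (1 / n : ℝ) *
        ∑ k ∈ Finset.range n, Real.log |1 + Real.cos (2 * π * (3 ^ k * xhat)) / 32|)
      atTop (𝓝 lam))
    (hneg : lam < 0) :
    ∃ δ > 0, ∀ z ∈ Set.Icc (0:ℝ) δ,
      Tendsto (fun n : ℕ => (kanCover^[n] (xhat, z)).2) atTop (𝓝 0) := by
  obtain ⟨C, hC⟩ := exists_abs_prod_le_of_tendsto hlim (by linarith : lam < lam / 2)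
  have hC₀ : 0 < C := zero_lt_one.trans_le (by simpa using hC 0)
  have hq : exp (lam / 2) < 1 := exp_lt_one_iff.2 (by linarith)
  have hδ : 0 < 31 * log 2 * (1 - exp (lam / 2)) / (2 * C) := by
    have := log_pos one_lt_two
    have : 0 < 1 - exp (lam / 2) := by linarith
    positivity
  refine ⟨min 1 (31 * log 2 * (1 - exp (lam / 2)) / (2 * C)), lt_min one_pos hδ, ?_⟩
  rintro z ⟨hz₀, hzδ⟩
  have hZ := kanCover_iterate_snd_mem_Icc (p := (xhat, z)) ⟨hz₀, hzδ.trans (min_le_left _ _)⟩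
  have hsmall : 2 * C * 31⁻¹ * z ≤ log 2 * (1 - exp (lam / 2)) := by
    have := (le_div_iff₀ (by positivity)).1 (hzδ.trans (min_le_right _ _))
    linarith
  have hbound := le_mul_pow_of_succ_le_mul_exp (exp_nonneg _) hq (by norm_num)
    (fun k => by linarith [neg_one_le_cos (2 * π * (3 ^ k * xhat))]) (fun n => (hZ n).1)
    (fun n => (le_abs_self _).trans (hC n)) (fun n => ?_) hsmall
  · exact squeeze_zero (fun n => (hZ n).1) hbound
      (by simpa using (tendsto_pow_atTop_nhds_zero_of_lt_one (exp_nonneg _) hq).const_mul _)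
  · rw [Function.iterate_succ_apply', ← kanCover_iterate_fst (xhat, z) n, ← div_eq_inv_mul]
    exact kanCover_snd_le (hZ n).1
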